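/- If the binomial coefficient C(s+t, s) is invertible in R, then Z_{s+t}(φ, M) is a direct summand of Z_s(φ, Z_t(φ,M)), the module of Koszul s-cycles of φ with coefficients in the R-module Z_t(φ,M). -/

import Mathlib

open Finset

section Koszul

variable {R : Type} [CommRing R] {ι : Type} [Fintype ι] [LinearOrder ι]

/-- The Koszul differential on `⋀ F ⊗ M`, modelled as `Finset ι → M`, for the Koszul
complex of the family `u : ι → R` with coefficients in `M`. -/
noncomputable def kD (u : ι → R) (M : Type) [AddCommGroup M] [Module R M] :
    (Finset ι → M) →ₗ[R] (Finset ι → M) where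
  toFun f := fun J => ∑ i ∈ Jᶜ, ((-1 : ℤ) ^ (J.filter (· < i)).card) • u i • f (insert i J)
  map_add' f g := by
    funext J
    simp [smul_add, Finset.sum_add_distrib]
  map_smul' r f := by
    funext J
    simp only [Pi.smul_apply, RingHom.id_apply]
    rw [Finset.smul_sum]
    refine Finset.sum_congr rfl fun i _ => ?_
    rw [smul_comm (u i) r, smul_comm ((-1 : ℤ) ^ (J.filter (· < i)).card) r]

variable (u : ι → R) (M : Type) [AddCommGroup M] [Module R M]

/-- The homological degree `t` part `K_t` of the Koszul complex, i.e. the elements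
supported on subsets of cardinality `t`. -/
def kSupp (t : ℕ) : Submodule R (Finset ι → M) where
  carrier := {f | ∀ J : Finset ι, J.card ≠ t → f J = 0}
  add_mem' := by
    intro f g hf hg J hJ
    simp [Pi.add_apply, hf J hJ, hg J hJ]
  zero_mem' := by intro J hJ; rfl
  smul_mem' := by
    intro c f hf J hJ
    simp [Pi.smul_apply, hf J hJ]

/-- Koszul cycles `Z_t(u, M)`. -/
noncomputable def kZ (t : ℕ) : Submodule R (Finset ι → M) :=
  kSupp M t ⊓ LinearMap.ker (kD u M)

/-- Koszul boundaries `B_t(u, M)`. -/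
noncomputable def kB (t : ℕ) : Submodule R (Finset ι → M) :=
  kSupp M t ⊓ Submodule.map (kD u M) (kSupp M (t + 1))

/-- The sign `σ(A,B) = (-1)^{#{(a,b) ∈ A×B : a > b}}`. -/
def ksign (A B : Finset ι) : ℤ := (-1) ^ ((A ×ˢ B).filter fun p => p.2 < p.1).card

/-- The multiplication `K(u,R) ⊗ K(u,M) → K(u,M)` of the Koszul complex, viewed as a module
over the exterior algebra. -/
def kMul (a : Finset ι → R) (f : Finset ι → M) : Finset ι → M :=
  fun J => ∑ A ∈ J.powerset, ksign A (J \ A) • a A • f (J \ A)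

/-- The identity element of the Koszul algebra `K(u,R)`. -/
def kOne : Finset ι → R := fun J => if J = ∅ then 1 else 0

/-- Iterated Koszul product of a list of elements of `K(u,R)`. -/
def kProd (l : List (Finset ι → R)) : Finset ι → R := l.foldr (kMul R) kOne

end Koszul

/-! The `(s, t)`-component of the comultiplication of `⋀ F` sends Koszul `(s+t)`-cycles to
`s`-cycles with coefficients in `t`-cycles, since it commutes up to sign with the Koszul
differential in each factor. Conversely, wedge multiplication `⋀^s F ⊗ ⋀^t F → ⋀^{s+t} F` sends
such bicycles to cycles by the Leibniz rule. Multiplying back after comultiplying is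
multiplication by `C(s+t, s)` (the number of `s`-subsets of an `(s+t)`-set), so when this is a
unit, its inverse times the multiplication is a retraction. -/

lemma mem_kSupp_iff {R : Type} [CommRing R] {ι M : Type} [AddCommGroup M] [Module R M] {t : ℕ}
    {f : Finset ι → M} : f ∈ kSupp (R := R) M t ↔ ∀ J, #J ≠ t → f J = 0 := Iff.rfl

section Signs

variable {ι : Type} [LinearOrder ι]

def insertSign (J : Finset ι) (i : ι) : ℤ := (-1) ^ #(J.filter (· < i))

lemma neg_one_pow_mul_self (n : ℕ) : (-1 : ℤ) ^ n * (-1) ^ n = 1 := by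
  rw [← pow_add, Even.neg_one_pow ⟨n, rfl⟩]

lemma insertSign_mul_self (J : Finset ι) (i : ι) : insertSign J i * insertSign J i = 1 :=
  neg_one_pow_mul_self _

lemma ksign_mul_self (A B : Finset ι) : ksign A B * ksign A B = 1 :=
  neg_one_pow_mul_self _

lemma insertSign_union {A B : Finset ι} (h : Disjoint A B) (i : ι) :
    insertSign (A ∪ B) i = insertSign A i * insertSign B i := by
  rw [insertSign, filter_union, card_union_of_disjoint
    (h.mono (filter_subset _ _) (filter_subset _ _)), pow_add]; rfl

lemma ksign_eq_pow_sum (A B : Finset ι) :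
    ksign A B = (-1) ^ ∑ a ∈ A, #(B.filter (· < a)) := by
  rw [ksign, card_filter, sum_product]
  simp_rw [← card_filter]

lemma ksign_insert_left {A : Finset ι} {i : ι} (hi : i ∉ A) (B : Finset ι) :
    ksign (insert i A) B = ksign A B * insertSign B i := by
  rw [ksign_eq_pow_sum, ksign_eq_pow_sum, sum_insert hi, insertSign, ← pow_add, add_comm]

lemma ksign_insert_right {A B : Finset ι} {i : ι} (hiA : i ∉ A) (hiB : i ∉ B) :
    ksign A (insert i B) = ksign A B * (-1) ^ #A * insertSign A i := by
  have hcard : #(A.filter (i < ·)) + #(A.filter (· < i)) = #A := by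
    rw [← card_union_of_disjoint (disjoint_filter.2 fun a _ h h' => lt_asymm h h'),
      ← filter_or]
    exact congrArg card (filter_true_of_mem fun a ha =>
      (lt_or_gt_of_ne (a := a) (b := i) fun h => hiA (h ▸ ha)).symm)
  have hshift : ∑ a ∈ A, #((insert i B).filter (· < a))
      = ∑ a ∈ A, #(B.filter (· < a)) + #(A.filter (i < ·)) := by
    rw [card_filter (i < ·), ← sum_add_distrib]
    refine sum_congr rfl fun a _ => ?_
    rw [filter_insert]
    split_ifs with h
    · rw [card_insert_of_notMem fun hm => hiB (mem_filter.1 hm).1]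
    · rfl
  rw [ksign_eq_pow_sum, ksign_eq_pow_sum, hshift, insertSign, ← hcard]
  linear_combination (-(-1 : ℤ) ^ (∑ a ∈ A, #(B.filter (· < a))) * (-1) ^ #(A.filter (i < ·))) *
    neg_one_pow_mul_self (#(A.filter (· < i)))

lemma insertSign_mul_ksign_insert_right {J K : Finset ι} {i : ι} (hiJ : i ∉ J) (hiK : i ∉ K)
    (h : Disjoint J K) :
    insertSign K i * ksign J (insert i K) = (-1) ^ #J * ksign J K * insertSign (J ∪ K) i := by
  rw [ksign_insert_right hiJ hiK, insertSign_union h]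
  ring

lemma insertSign_union_mul_ksign_insert_right {J K : Finset ι} {i : ι} (hiJ : i ∉ J)
    (hiK : i ∉ K) (h : Disjoint J K) :
    insertSign (J ∪ K) i * ksign J (insert i K) = ksign J K * (-1) ^ #J * insertSign K i := by
  rw [ksign_insert_right hiJ hiK, insertSign_union h]
  linear_combination (ksign J K * (-1) ^ #J * insertSign K i) * insertSign_mul_self J i

lemma insertSign_mul_ksign_insert_left {J K : Finset ι} {i : ι} (hiJ : i ∉ J)
    (h : Disjoint J K) :
    insertSign J i * ksign (insert i J) K = ksign J K * insertSign (J ∪ K) i := by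
  rw [ksign_insert_left hiJ, insertSign_union h]
  ring

lemma insertSign_union_mul_ksign_insert_left {J K : Finset ι} {i : ι} (hiJ : i ∉ J)
    (h : Disjoint J K) :
    insertSign (J ∪ K) i * ksign (insert i J) K = ksign J K * insertSign J i := by
  rw [ksign_insert_left hiJ, insertSign_union h]
  linear_combination (ksign J K * insertSign J i) * insertSign_mul_self K i

lemma ksign_insert_left_eq_neg_ksign_insert_right {J K : Finset ι} {i : ι} (hiJ : i ∉ J)
    (hiK : i ∉ K) :
    ksign (insert i J) K * (-1) ^ #(insert i J) * insertSign K i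
      = -(ksign J (insert i K) * insertSign J i) := by
  rw [card_insert_of_notMem hiJ, ksign_insert_left hiJ, ksign_insert_right hiJ hiK]
  linear_combination (-(-1) ^ #J * ksign J K) * insertSign_mul_self K i
    + ((-1) ^ #J * ksign J K) * insertSign_mul_self J i

end Signs

section FinsetSums

variable {α : Type} [DecidableEq α] {M : Type} [AddCommMonoid M]

lemma sum_powerset_sum_mem (L : Finset α) (h : Finset α → α → M) :
    ∑ J ∈ L.powerset, ∑ i ∈ J, h J i = ∑ J ∈ L.powerset, ∑ i ∈ L \ J, h (insert i J) i := by
  rw [sum_sigma', sum_sigma']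
  refine sum_nbij' (fun x => ⟨x.1.erase x.2, x.2⟩) (fun y => ⟨insert y.2 y.1, y.2⟩)
    ?_ ?_ ?_ ?_ ?_
  · rintro ⟨J, i⟩ hx
    simp only [mem_sigma, mem_powerset] at hx ⊢
    exact ⟨(erase_subset i J).trans hx.1, mem_sdiff.2 ⟨hx.1 hx.2, notMem_erase i J⟩⟩
  · rintro ⟨J, i⟩ hy
    simp only [mem_sigma, mem_powerset, mem_sdiff] at hy ⊢
    exact ⟨insert_subset hy.2.1 hy.1, mem_insert_self i J⟩
  · rintro ⟨J, i⟩ hx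
    simp only [mem_sigma] at hx
    simp only [insert_erase hx.2]
  · rintro ⟨J, i⟩ hy
    simp only [mem_sigma, mem_sdiff] at hy
    simp only [erase_insert hy.2.2]
  · rintro ⟨J, i⟩ hx
    simp only [mem_sigma] at hx
    simp only [insert_erase hx.2]

variable [Fintype α]

lemma sum_compl_eq_add_sum_sdiff {A B : Finset α} (h : A ⊆ B) (F : α → M) :
    ∑ i ∈ Aᶜ, F i = ∑ i ∈ Bᶜ, F i + ∑ i ∈ B \ A, F i := by
  rw [← sum_sdiff (compl_subset_compl.2 h), compl_sdiff_compl, add_comm]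

lemma sum_compl_eq_of_subset {A C : Finset α} (h : A ⊆ C) {F : α → M}
    (hF : ∀ i ∈ C, i ∉ A → F i = 0) : ∑ i ∈ Aᶜ, F i = ∑ i ∈ Cᶜ, F i := by
  refine (sum_subset (compl_subset_compl.2 h) fun i hiA hiC => ?_).symm
  rw [mem_compl] at hiA hiC
  exact hF i (not_not.1 hiC) hiA

end FinsetSums

section Comultiplication

variable {R : Type} [CommRing R] {ι : Type} [LinearOrder ι] {M : Type} [AddCommGroup M]
  [Module R M]

/- `kComul R s f J K` is the coefficient of `e_J ⊗ e_K` in the `(s, ·)`-component of the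
coproduct of `f`, and `kWedge R g L` is the coefficient of `e_L` in the wedge product of `g`. -/
variable (R) in
def kComul (s : ℕ) : (Finset ι → M) →ₗ[R] (Finset ι → Finset ι → M) where
  toFun f J K := if #J = s ∧ Disjoint J K then ksign J K • f (J ∪ K) else 0
  map_add' f f' := by
    ext J K
    simp only [Pi.add_apply]
    split_ifs <;> simp [smul_add]
  map_smul' r f := by
    ext J K
    simp only [Pi.smul_apply, RingHom.id_apply]
    split_ifs <;> simp [smul_comm r]

lemma kComul_apply (s : ℕ) (f : Finset ι → M) (J K : Finset ι) :
    kComul R s f J K = if #J = s ∧ Disjoint J K then ksign J K • f (J ∪ K) else 0 := rfl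

variable (R) in
def kWedge : (Finset ι → Finset ι → M) →ₗ[R] (Finset ι → M) where
  toFun g L := ∑ J ∈ L.powerset, ksign J (L \ J) • g J (L \ J)
  map_add' g g' := by
    ext L
    simp [smul_add, sum_add_distrib]
  map_smul' r g := by
    ext L
    simp [smul_sum, smul_comm r]

lemma kWedge_apply (g : Finset ι → Finset ι → M) (L : Finset ι) :
    kWedge R g L = ∑ J ∈ L.powerset, ksign J (L \ J) • g J (L \ J) := rfl

lemma kWedge_kComul_apply (s : ℕ) (f : Finset ι → M) (L : Finset ι) :
    kWedge R (kComul R s f) L = (#L).choose s • f L := by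
  have hterm : ∀ J ∈ L.powerset,
      ksign J (L \ J) • kComul R s f J (L \ J) = if #J = s then f L else 0 := by
    intro J hJ
    simp only [kComul_apply, disjoint_sdiff, and_true, union_sdiff_of_subset (mem_powerset.1 hJ)]
    split_ifs
    · rw [smul_smul, ksign_mul_self, one_smul]
    · rw [smul_zero]
  rw [kWedge_apply, sum_congr rfl hterm, ← sum_filter, sum_const, ← powersetCard_eq_filter,
    card_powersetCard]

lemma kComul_mem_kSupp (s : ℕ) (f : Finset ι → M) :
    kComul R s f ∈ kSupp (R := R) (Finset ι → M) s :=
  fun _ hJ => funext fun _ => if_neg fun h => hJ h.1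

lemma kComul_apply_mem_kSupp {s t : ℕ} {f : Finset ι → M} (hf : f ∈ kSupp (R := R) M (s + t))
    (J : Finset ι) : kComul R s f J ∈ kSupp (R := R) M t := by
  intro K hK
  rw [kComul_apply]
  split_ifs with h
  · rw [hf _ (by rw [card_union_of_disjoint h.2, h.1]; omega), smul_zero]
  · rfl

lemma kWedge_mem_kSupp {s t : ℕ} {g : Finset ι → Finset ι → M}
    (hg : g ∈ kSupp (R := R) (Finset ι → M) s) (hgJ : ∀ J, g J ∈ kSupp (R := R) M t) :
    kWedge R g ∈ kSupp (R := R) M (s + t) := by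
  intro L hL
  refine sum_eq_zero fun J hJ => ?_
  have hJL := mem_powerset.1 hJ
  by_cases hJs : #J = s
  · have := card_le_card hJL
    rw [hgJ J (L \ J) (by rw [card_sdiff_of_subset hJL]; omega), smul_zero]
  · rw [hg J hJs, Pi.zero_apply, smul_zero]

lemma insertSign_smul_kWedge_insert (u : ι → R) (g : Finset ι → Finset ι → M) {L : Finset ι}
    {i : ι} (hi : i ∉ L) :
    insertSign L i • u i • kWedge R g (insert i L) = ∑ J ∈ L.powerset,
      (ksign J (L \ J) • insertSign J i • u i • g (insert i J) (L \ J)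
        + (ksign J (L \ J) * (-1) ^ #J) • insertSign (L \ J) i • u i • g J (insert i (L \ J))) := by
  rw [kWedge_apply, sum_powerset_insert hi, smul_add, smul_add, smul_sum, smul_sum, smul_sum,
    smul_sum, add_comm, ← sum_add_distrib]
  refine sum_congr rfl fun J hJ => ?_
  have hJL := mem_powerset.1 hJ
  have hiJ : i ∉ J := fun h => hi (hJL h)
  have hiLJ : i ∉ L \ J := fun h => hi (mem_sdiff.1 h).1
  have hleft := insertSign_union_mul_ksign_insert_left hiJ (disjoint_sdiff (t := L))
  have hright := insertSign_union_mul_ksign_insert_right hiJ hiLJ (disjoint_sdiff (t := L))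
  rw [union_sdiff_of_subset hJL] at hleft hright
  rw [insert_sdiff_insert, sdiff_insert_of_notMem hi, insert_sdiff_of_notMem _ hiJ,
    smul_comm (u i), smul_comm (u i), smul_smul, smul_smul, hleft, hright, mul_smul, mul_smul]

end Comultiplication

section Differential

variable {R : Type} [CommRing R] {ι : Type} [Fintype ι] [LinearOrder ι] (u : ι → R)
  {M : Type} [AddCommGroup M] [Module R M]

lemma kD_apply (f : Finset ι → M) (J : Finset ι) :
    kD u M f J = ∑ i ∈ Jᶜ, insertSign J i • u i • f (insert i J) := rfl

lemma kD_apply_apply (g : Finset ι → Finset ι → M) (J K : Finset ι) :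
    kD u (Finset ι → M) g J K = ∑ i ∈ Jᶜ, insertSign J i • u i • g (insert i J) K := by
  rw [kD_apply, Finset.sum_apply]
  rfl

lemma kD_compLeft {N : Type} [AddCommGroup N] [Module R N] (φ : M →ₗ[R] N)
    (f : Finset ι → M) : kD u N (φ.compLeft _ f) = φ.compLeft _ (kD u M f) := by
  ext J
  simp [kD_apply, map_sum]

lemma mem_kZ_iff {t : ℕ} {f : Finset ι → M} :
    f ∈ kZ u M t ↔ f ∈ kSupp (R := R) M t ∧ kD u M f = 0 := by
  rw [kZ, Submodule.mem_inf, LinearMap.mem_ker]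

lemma compLeft_mem_kZ_iff {N : Type} [AddCommGroup N] [Module R N] {φ : M →ₗ[R] N}
    (hφ : Function.Injective φ) {t : ℕ} {f : Finset ι → M} :
    φ.compLeft _ f ∈ kZ u N t ↔ f ∈ kZ u M t := by
  have hφ' : Function.Injective (φ.compLeft (Finset ι)) := hφ.comp_left
  simp only [mem_kZ_iff, mem_kSupp_iff, kD_compLeft, ← map_zero (φ.compLeft (Finset ι)),
    hφ'.eq_iff]
  simp [map_eq_zero_iff φ hφ]

lemma kD_kComul_apply (s : ℕ) (f : Finset ι → M) (J : Finset ι) :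
    kD u M (kComul R s f J) = (-1 : ℤ) ^ s • kComul R s (kD u M f) J := by
  ext K
  rw [kD_apply, Pi.smul_apply, kComul_apply]
  by_cases hJK : #J = s ∧ Disjoint J K
  · obtain ⟨hJ, hd⟩ := hJK
    rw [if_pos ⟨hJ, hd⟩, kD_apply, sum_compl_eq_of_subset (subset_union_right (s₁ := J)), smul_sum,
      smul_sum]
    · refine sum_congr rfl fun i hi => ?_
      have hiJK : i ∉ J ∧ i ∉ K := by simpa using hi
      rw [kComul_apply, if_pos ⟨hJ, disjoint_insert_right.2 ⟨hiJK.1, hd⟩⟩, union_insert,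
        smul_comm (u i), smul_smul, insertSign_mul_ksign_insert_right hiJK.1 hiJK.2 hd, hJ,
        mul_smul, mul_smul]
    · intro i hiJK hiK
      have hiJ : i ∈ J := (mem_union.1 hiJK).resolve_right hiK
      rw [kComul_apply, if_neg fun h => disjoint_left.1 h.2 hiJ (mem_insert_self i K),
        smul_zero, smul_zero]
  · rw [if_neg hJK, smul_zero]
    refine sum_eq_zero fun i _ => ?_
    rw [kComul_apply, if_neg fun h => hJK ⟨h.1, h.2.mono_right (subset_insert i K)⟩,
      smul_zero, smul_zero]

lemma kD_kComul_succ (s : ℕ) (f : Finset ι → M) :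
    kD u (Finset ι → M) (kComul R (s + 1) f) = kComul R s (kD u M f) := by
  ext J K
  rw [kD_apply_apply, kComul_apply]
  by_cases hJK : #J = s ∧ Disjoint J K
  · obtain ⟨hJ, hd⟩ := hJK
    rw [if_pos ⟨hJ, hd⟩, kD_apply, sum_compl_eq_of_subset (subset_union_left (s₂ := K)), smul_sum]
    · refine sum_congr rfl fun i hi => ?_
      have hiJK : i ∉ J ∧ i ∉ K := by simpa using hi
      rw [kComul_apply, if_pos ⟨by rw [card_insert_of_notMem hiJK.1, hJ],
          disjoint_insert_left.2 ⟨hiJK.2, hd⟩⟩, insert_union, smul_comm (u i), smul_smul,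
        insertSign_mul_ksign_insert_left hiJK.1 hd, mul_smul]
    · intro i hiJK hiJ
      have hiK : i ∈ K := (mem_union.1 hiJK).resolve_left hiJ
      rw [kComul_apply, if_neg fun h => disjoint_right.1 h.2 hiK (mem_insert_self i J),
        smul_zero, smul_zero]
  · rw [if_neg hJK]
    refine sum_eq_zero fun i hi => ?_
    rw [kComul_apply, if_neg, smul_zero, smul_zero]
    rintro ⟨hs, hd⟩
    rw [card_insert_of_notMem (mem_compl.1 hi)] at hs
    exact hJK ⟨by omega, hd.mono_left (subset_insert i J)⟩

lemma kD_kComul_zero (f : Finset ι → M) : kD u (Finset ι → M) (kComul R 0 f) = 0 := by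
  ext J K
  rw [kD_apply_apply]
  refine sum_eq_zero fun i _ => ?_
  rw [kComul_apply, if_neg fun h => insert_ne_empty i J (card_eq_zero.1 h.1), smul_zero,
    smul_zero]

lemma kD_kWedge (g : Finset ι → Finset ι → M) :
    kD u M (kWedge R g) =
      kWedge R (kD u (Finset ι → M) g) + kWedge R (fun J => (-1 : ℤ) ^ #J • kD u M (g J)) := by
  ext L
  set a : Finset ι → ι → M := fun J i =>
    ksign J (L \ J) • insertSign J i • u i • g (insert i J) (L \ J) with ha
  set b : Finset ι → ι → M := fun J i =>
    (ksign J (L \ J) * (-1) ^ #J) • insertSign (L \ J) i • u i • g J (insert i (L \ J)) with hb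
  have hlhs : kD u M (kWedge R g) L
      = ∑ J ∈ L.powerset, (∑ i ∈ Lᶜ, a J i + ∑ i ∈ Lᶜ, b J i) := by
    rw [kD_apply, sum_congr rfl fun i hi => insertSign_smul_kWedge_insert u g (mem_compl.1 hi),
      sum_comm]
    exact sum_congr rfl fun J _ => sum_add_distrib
  have hout : kWedge R (kD u (Finset ι → M) g) L
      = ∑ J ∈ L.powerset, (∑ i ∈ Lᶜ, a J i + ∑ i ∈ L \ J, a J i) := by
    refine sum_congr rfl fun J hJ => ?_
    rw [kD_apply_apply, smul_sum, sum_compl_eq_add_sum_sdiff (mem_powerset.1 hJ)]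
  have hin : kWedge R (fun J => (-1 : ℤ) ^ #J • kD u M (g J)) L
      = ∑ J ∈ L.powerset, (∑ i ∈ Lᶜ, b J i + ∑ i ∈ J, b J i) := by
    refine sum_congr rfl fun J hJ => ?_
    dsimp only
    rw [Pi.smul_apply, kD_apply, smul_sum, smul_sum, sum_compl_eq_add_sum_sdiff sdiff_subset,
      Finset.sdiff_sdiff_eq_self (mem_powerset.1 hJ)]
    simp only [hb, smul_smul, mul_assoc]
  -- the leftover terms cancel in pairs `(J ∪ {i}, i) ↔ (J, i)`
  have hcancel : ∑ J ∈ L.powerset, ∑ i ∈ J, b J i = -∑ J ∈ L.powerset, ∑ i ∈ L \ J, a J i := by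
    rw [sum_powerset_sum_mem, ← sum_neg_distrib]
    refine sum_congr rfl fun J _ => ?_
    rw [← sum_neg_distrib]
    refine sum_congr rfl fun i hi => ?_
    have hiJ : i ∉ J := (mem_sdiff.1 hi).2
    have hK : L \ J = insert i (L \ insert i J) := by
      rw [sdiff_insert, insert_erase hi]
    have hiK : i ∉ L \ insert i J := fun h => (mem_sdiff.1 h).2 (mem_insert_self i J)
    simp only [ha, hb]
    rw [hK, smul_smul, ksign_insert_left_eq_neg_ksign_insert_right hiJ hiK, neg_smul, ← smul_smul]
  rw [Pi.add_apply, hlhs, hout, hin]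
  simp only [sum_add_distrib]
  rw [hcancel]
  abel

end Differential

section Cycles

variable {R : Type} [CommRing R] {ι : Type} [Fintype ι] [LinearOrder ι] (u : ι → R)
  {M : Type} [AddCommGroup M] [Module R M]

lemma kComul_apply_mem_kZ {s t : ℕ} {f : Finset ι → M} (hf : f ∈ kZ u M (s + t))
    (J : Finset ι) : kComul R s f J ∈ kZ u M t := by
  rw [mem_kZ_iff] at hf ⊢
  refine ⟨kComul_apply_mem_kSupp hf.1 J, ?_⟩
  rw [kD_kComul_apply, hf.2, map_zero, Pi.zero_apply, smul_zero]

lemma kComul_mem_kZ {s t : ℕ} {f : Finset ι → M} (hf : f ∈ kZ u M (s + t)) :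
    kComul R s f ∈ kZ u (Finset ι → M) s := by
  refine (mem_kZ_iff u).2 ⟨kComul_mem_kSupp s f, ?_⟩
  cases s with
  | zero => exact kD_kComul_zero u f
  | succ s => rw [kD_kComul_succ, ((mem_kZ_iff u).1 hf).2, map_zero]

lemma kWedge_mem_kZ {s t : ℕ} {g : Finset ι → Finset ι → M} (hg : g ∈ kZ u (Finset ι → M) s)
    (hgJ : ∀ J, g J ∈ kZ u M t) : kWedge R g ∈ kZ u M (s + t) := by
  rw [mem_kZ_iff] at hg ⊢
  simp only [mem_kZ_iff] at hgJ
  have hinner : (fun J => (-1 : ℤ) ^ #J • kD u M (g J)) = 0 :=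
    funext fun J => by rw [(hgJ J).2, smul_zero, Pi.zero_apply]
  refine ⟨kWedge_mem_kSupp hg.1 fun J => (hgJ J).1, ?_⟩
  rw [kD_kWedge, hg.2, hinner, map_zero, add_zero]

def kZComul (s t : ℕ) : kZ u M (s + t) →ₗ[R] kZ u (kZ u M t) s where
  toFun f := ⟨fun J => ⟨kComul R s f J, kComul_apply_mem_kZ u f.2 J⟩,
    (compLeft_mem_kZ_iff u (kZ u M t).injective_subtype).1 (kComul_mem_kZ u f.2)⟩
  map_add' f f' := by
    ext J K
    simp
  map_smul' r f := by
    ext J K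
    simp

noncomputable def kZWedge (s t : ℕ) : kZ u (kZ u M t) s →ₗ[R] kZ u M (s + t) :=
  LinearMap.codRestrict _ ((kWedge R).comp
      (((kZ u M t).subtype.compLeft (Finset ι)).comp (kZ u (kZ u M t) s).subtype)) fun g =>
    kWedge_mem_kZ u ((compLeft_mem_kZ_iff u (kZ u M t).injective_subtype).2 g.2) fun J => (g.1 J).2

lemma kZWedge_comp_kZComul (s t : ℕ) :
    (kZWedge u s t).comp (kZComul u s t)
      = ((s + t).choose s : R) • LinearMap.id (M := kZ u M (s + t)) := by
  ext f L
  change kWedge R (kComul R s (f : Finset ι → M)) L = ((s + t).choose s : R) • (f : Finset ι → M) L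
  rw [kWedge_kComul_apply]
  by_cases hL : #L = s + t
  · rw [hL, Nat.cast_smul_eq_nsmul]
  · rw [((mem_kZ_iff u).1 f.2).1 L hL, smul_zero, smul_zero]

end Cycles

/-- If the binomial coefficient `C(s+t,s)` is invertible in `R`, then `Z_{s+t}(φ,M)` is a
direct summand of `Z_s(φ, Z_t(φ,M))`, the module of Koszul `s`-cycles of `φ` with
coefficients in the `R`-module `Z_t(φ,M)`.  Here `φ : F → R` is the linear map on the free
module `F` with basis `(e_i)_{i ∈ ι}`, determined by `u i = φ(e_i)`. -/
theorem cycles_direct_summand {R : Type} [CommRing R] {ι : Type} [Fintype ι] [LinearOrder ι]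
    (u : ι → R) (M : Type) [AddCommGroup M] [Module R M] (s t : ℕ)
    (hinv : IsUnit (((s + t).choose s : ℕ) : R)) :
    ∃ (j : ↥(kZ u M (s + t)) →ₗ[R] ↥(kZ u (↥(kZ u M t)) s))
      (p : ↥(kZ u (↥(kZ u M t)) s) →ₗ[R] ↥(kZ u M (s + t))),
      p.comp j = LinearMap.id := by
  refine ⟨kZComul u s t, ((hinv.unit⁻¹ : Rˣ) : R) • kZWedge u s t, ?_⟩
  rw [LinearMap.smul_comp, kZWedge_comp_kZComul, smul_smul, hinv.val_inv_mul, one_smul]
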